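/- arXiv:2308.06607 — 7 statements merged into one kernel-verified Lean document; each statement's English description precedes it below -/
import Mathlib

section
/- Let X and Y be measurable spaces, let (G₀, G₁) be a pair of probability measures on X, and let (P₀, P₁) be a garbling of (G₀, G₁) via a Markov kernel κ from X to Y. Then for every α ∈ [0,1], the maximal power at level α of the garbled experiment is no larger than that of the original experiment: sup{ ∫ ψ dP₁ : ψ : Y → [0,1] measurable, ∫ ψ dP₀ ≤ α } ≤ sup{ ∫ ψ dG₁ : ψ : X → [0,1] measurable, ∫ ψ dG₀ ≤ α }. -/
open MeasureTheory ProbabilityTheory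

section Tests

variable {Y : Type*} [MeasurableSpace Y] {ψ : Y → ℝ}

lemma integral_le_one_of_le_one (μ : Measure Y) [IsProbabilityMeasure μ]
    (h0 : ∀ y, 0 ≤ ψ y) (h1 : ∀ y, ψ y ≤ 1) : ∫ y, ψ y ∂μ ≤ 1 := by
  calc ∫ y, ψ y ∂μ ≤ ∫ _, (1 : ℝ) ∂μ :=
        integral_mono_of_nonneg (.of_forall h0) (integrable_const 1) (.of_forall h1)
    _ = 1 := by simp

lemma integrable_of_nonneg_of_le_one (μ : Measure Y) [IsFiniteMeasure μ] (hm : Measurable ψ)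
    (h0 : ∀ y, 0 ≤ ψ y) (h1 : ∀ y, ψ y ≤ 1) : Integrable ψ μ :=
  .of_bound hm.aestronglyMeasurable 1 <| .of_forall fun y => by
    rw [Real.norm_of_nonneg (h0 y)]
    exact h1 y

end Tests

lemma integral_integral_kernel_eq_integral_bind {X Y : Type*} [MeasurableSpace X]
    [MeasurableSpace Y] (μ : Measure X) [SFinite μ] (κ : Kernel X Y) [IsSFiniteKernel κ]
    {f : Y → ℝ} (hf : Integrable f (μ.bind κ)) :
    ∫ x, ∫ y, f y ∂κ x ∂μ = ∫ y, f y ∂(μ.bind κ) := by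
  rw [Measure.comp_eq_comp_const_apply] at hf ⊢
  rw [Kernel.integral_comp hf]
  simp

/-- Garbling cannot increase the maximal power of a level-α test: if
`(P₀, P₁) = (G₀.bind κ, G₁.bind κ)` for a Markov kernel `κ`, then the supremum of powers of
randomized level-α tests for the garbled experiment is at most that of the original one. -/
theorem garbling_le_maxPower
    {X Y : Type*} [MeasurableSpace X] [MeasurableSpace Y]
    (G₀ G₁ : Measure X) [IsProbabilityMeasure G₀] [IsProbabilityMeasure G₁]
    (κ : Kernel X Y) [IsMarkovKernel κ]
    (P₀ P₁ : Measure Y) (hP₀ : P₀ = G₀.bind (fun x => κ x)) (hP₁ : P₁ = G₁.bind (fun x => κ x))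
    (α : ℝ) (hα : α ∈ Set.Icc (0 : ℝ) 1) :
    sSup {r : ℝ | ∃ ψ : Y → ℝ, Measurable ψ ∧ (∀ y, 0 ≤ ψ y) ∧ (∀ y, ψ y ≤ 1) ∧
        (∫ y, ψ y ∂P₀) ≤ α ∧ r = ∫ y, ψ y ∂P₁} ≤
    sSup {r : ℝ | ∃ ψ : X → ℝ, Measurable ψ ∧ (∀ x, 0 ≤ ψ x) ∧ (∀ x, ψ x ≤ 1) ∧
        (∫ x, ψ x ∂G₀) ≤ α ∧ r = ∫ x, ψ x ∂G₁} := by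
  subst hP₀ hP₁
  refine csSup_le_csSup ⟨1, ?_⟩ ⟨0, fun _ => 0, measurable_const, fun _ => le_rfl,
    fun _ => zero_le_one, by simpa using hα.1, by simp⟩ ?_
  · rintro _ ⟨ψ, -, h0, h1, -, rfl⟩
    exact integral_le_one_of_le_one G₁ h0 h1
  · rintro _ ⟨ψ, hm, h0, h1, hsize, rfl⟩
    -- Garbling the data by `κ` and then applying `ψ` is the test `x ↦ ∫ ψ d(κ x)` on `X`.
    have hpull (G : Measure X) [IsProbabilityMeasure G] :
        ∫ x, ∫ y, ψ y ∂κ x ∂G = ∫ y, ψ y ∂G.bind κ :=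
      integral_integral_kernel_eq_integral_bind G κ (integrable_of_nonneg_of_le_one _ hm h0 h1)
    refine ⟨fun x => ∫ y, ψ y ∂κ x, hm.stronglyMeasurable.integral_kernel.measurable,
      fun x => integral_nonneg h0, fun x => integral_le_one_of_le_one (κ x) h0 h1, ?_, ?_⟩
    · exact (hpull G₀).trans_le hsize
    · exact (hpull G₁).symm
end

section
/- Let Y be a measurable space, E ⊆ ℝ, and let H, L : E → (probability measures on Y) be two families such that for all e, e' ∈ E with e ≤ e' there exists a single Markov kernel κ from Y to Y with H(e) = H(e').bind κ and L(e) = L(e').bind κ (higher effort is Blackwell more informative). Fix α ∈ [0,1] and define, for (e₁, e₂) ∈ E × E, Φ(e₁, e₂) := sup{ ∫ ψ d(H(e₁) ⊗ H(e₂)) : ψ : Y × Y → [0,1] measurable, ∫ ψ d(L(e₁) ⊗ L(e₂)) ≤ α }, the maximal power at level α for testing the null 'both independent outputs are drawn from the L-family' against the alternative 'both are drawn from the H-family'. Then Φ is nondecreasing in e₁ and nondecreasing in e₂. -/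
/-!
Garbling cannot increase power: if `κ` is a Markov kernel, every test `ψ` of the garbled
experiment `(κ ∘ₘ P₀, κ ∘ₘ P₁)` yields the test `x ↦ ∫ ψ ∂κ x` of `(P₀, P₁)` with the same size
and power. Garbling one player's output by `κ` garbles the joint output by `κ ∥ₖ id` (or
`id ∥ₖ κ`), so lowering either player's effort can only lower the maximal power.
-/

open MeasureTheory ProbabilityTheory

/-- The maximal power at level `α` for testing the null `P₀` against the alternative `P₁`:
the supremum of powers of randomized tests of size at most `α`. -/
noncomputable def maxPower {Y : Type*} [MeasurableSpace Y] (P₀ P₁ : Measure Y) (α : ℝ) : ℝ :=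
  sSup {r : ℝ | ∃ ψ : Y → ℝ, Measurable ψ ∧ (∀ y, 0 ≤ ψ y) ∧ (∀ y, ψ y ≤ 1) ∧
    (∫ y, ψ y ∂P₀) ≤ α ∧ r = ∫ y, ψ y ∂P₁}

namespace MeasureTheory.Measure

variable {X Y : Type*} [MeasurableSpace X] [MeasurableSpace Y]

lemma integral_comp_eq_integral_integral {μ : Measure X} [SFinite μ] {κ : Kernel X Y}
    {f : Y → ℝ} (hf : Integrable f (κ ∘ₘ μ)) :
    ∫ y, f y ∂(κ ∘ₘ μ) = ∫ x, ∫ y, f y ∂κ x ∂μ := by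
  rw [comp_eq_comp_const_apply] at hf ⊢
  exact Kernel.integral_comp hf

end MeasureTheory.Measure

section maxPower

variable {X Y Z : Type*} [MeasurableSpace X] [MeasurableSpace Y] [MeasurableSpace Z]

theorem maxPower_comp_le {P₀ P₁ : Measure X} [IsFiniteMeasure P₀] [IsFiniteMeasure P₁]
    (κ : Kernel X Y) [IsMarkovKernel κ] {α : ℝ} (hα : 0 ≤ α) :
    maxPower (κ ∘ₘ P₀) (κ ∘ₘ P₁) α ≤ maxPower P₀ P₁ α := by
  have bdd : BddAbove {r : ℝ | ∃ ψ : X → ℝ, Measurable ψ ∧ (∀ x, 0 ≤ ψ x) ∧ (∀ x, ψ x ≤ 1) ∧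
      (∫ x, ψ x ∂P₀) ≤ α ∧ r = ∫ x, ψ x ∂P₁} := by
    refine ⟨∫ _, (1 : ℝ) ∂P₁, ?_⟩
    rintro r ⟨ψ, hψ, h0, h1, -, rfl⟩
    exact integral_mono (.of_mem_Icc 0 1 hψ.aemeasurable (.of_forall fun x ↦ ⟨h0 x, h1 x⟩))
      (integrable_const 1) h1
  refine csSup_le_csSup bdd ⟨0, 0, measurable_const, fun _ ↦ le_rfl, fun _ ↦ zero_le_one,
    by simpa using hα, by simp⟩ ?_
  rintro r ⟨ψ, hψ, h0, h1, hsize, rfl⟩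
  have hint (P : Measure Y) [IsFiniteMeasure P] : Integrable ψ P :=
    .of_mem_Icc 0 1 hψ.aemeasurable (.of_forall fun y ↦ ⟨h0 y, h1 y⟩)
  refine ⟨fun x ↦ ∫ y, ψ y ∂κ x, hψ.stronglyMeasurable.integral_kernel.measurable,
    fun x ↦ integral_nonneg h0, fun x ↦ ?_, ?_, ?_⟩
  · simpa using integral_mono (hint (κ x)) (integrable_const 1) h1
  · rwa [← Measure.integral_comp_eq_integral_integral (hint _)]
  · exact Measure.integral_comp_eq_integral_integral (hint _)

theorem maxPower_prod_comp_left_le {μ₀ μ₁ : Measure X} {ν₀ ν₁ : Measure Z}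
    [IsFiniteMeasure μ₀] [IsFiniteMeasure μ₁] [IsFiniteMeasure ν₀] [IsFiniteMeasure ν₁]
    (κ : Kernel X Y) [IsMarkovKernel κ] {α : ℝ} (hα : 0 ≤ α) :
    maxPower ((κ ∘ₘ μ₀).prod ν₀) ((κ ∘ₘ μ₁).prod ν₁) α ≤ maxPower (μ₀.prod ν₀) (μ₁.prod ν₁) α := by
  rw [Measure.prod_comp_left, Measure.prod_comp_left]
  exact maxPower_comp_le _ hα

theorem maxPower_prod_comp_right_le {μ₀ μ₁ : Measure Z} {ν₀ ν₁ : Measure X}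
    [IsFiniteMeasure μ₀] [IsFiniteMeasure μ₁] [IsFiniteMeasure ν₀] [IsFiniteMeasure ν₁]
    (κ : Kernel X Y) [IsMarkovKernel κ] {α : ℝ} (hα : 0 ≤ α) :
    maxPower (μ₀.prod (κ ∘ₘ ν₀)) (μ₁.prod (κ ∘ₘ ν₁)) α ≤ maxPower (μ₀.prod ν₀) (μ₁.prod ν₁) α := by
  rw [Measure.prod_comp_right, Measure.prod_comp_right]
  exact maxPower_comp_le _ hα

end maxPower

/-- Lemma 1 of the paper: if higher effort is Blackwell more informative (the
experiment `(H e, L e)` is a garbling, via a single Markov kernel, of `(H e', L e')` whenever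
`e ≤ e'` in `E`), then the maximal power at level `α` of the two-player product experiment
(null: both outputs drawn from `L`, alternative: both drawn from `H`) is nondecreasing in each
player's effort. -/
theorem maxPower_prod_monotone_in_effort
    {Y : Type*} [MeasurableSpace Y] (E : Set ℝ) (H L : ℝ → Measure Y)
    (hH : ∀ e ∈ E, IsProbabilityMeasure (H e)) (hL : ∀ e ∈ E, IsProbabilityMeasure (L e))
    (hinfo : ∀ e ∈ E, ∀ e' ∈ E, e ≤ e' →
      ∃ κ : Kernel Y Y, IsMarkovKernel κ ∧
        H e = (H e').bind (fun y => κ y) ∧ L e = (L e').bind (fun y => κ y))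
    (α : ℝ) (hα : α ∈ Set.Icc (0 : ℝ) 1)
    (Φ : ℝ → ℝ → ℝ)
    (hΦ : ∀ e₁ e₂, Φ e₁ e₂ = maxPower ((L e₁).prod (L e₂)) ((H e₁).prod (H e₂)) α) :
    (∀ e₁ ∈ E, ∀ e₁' ∈ E, ∀ e₂ ∈ E, e₁ ≤ e₁' → Φ e₁ e₂ ≤ Φ e₁' e₂) ∧
    (∀ e₁ ∈ E, ∀ e₂ ∈ E, ∀ e₂' ∈ E, e₂ ≤ e₂' → Φ e₁ e₂ ≤ Φ e₁ e₂') := by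
  constructor
  · intro e₁ he₁ e₁' he₁' e₂ he₂ hle
    obtain ⟨κ, hκ, hHκ, hLκ⟩ := hinfo e₁ he₁ e₁' he₁' hle
    have := hH e₁' he₁'; have := hL e₁' he₁'; have := hH e₂ he₂; have := hL e₂ he₂
    rw [hΦ, hΦ, hHκ, hLκ]
    exact maxPower_prod_comp_left_le κ hα.1
  · intro e₁ he₁ e₂ he₂ e₂' he₂' hle
    obtain ⟨κ, hκ, hHκ, hLκ⟩ := hinfo e₂ he₂ e₂' he₂' hle
    have := hH e₁ he₁; have := hL e₁ he₁; have := hH e₂' he₂'; have := hL e₂' he₂'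
    rw [hΦ, hΦ, hHκ, hLκ]
    exact maxPower_prod_comp_right_le κ hα.1
end

section
/- Fix w > 0, γ > 0, β > 0, α ∈ (0,1), and set K = 2w(1 − α)/γ. Define f : [0, ∞) → ℝ by f(e) = γe + (α + min(γe/(2w), 1 − α))·βγ² − e²/2. If γ(1 + βγ²/(2w)) ≤ K, then e* = γ(1 + βγ²/(2w)) is the unique maximizer of f on [0, ∞); in particular, the optimal persuasion effort e* strictly exceeds γ, the statically optimal effort. -/
/-- Example 3, interior optimum of the persuasion effort: with
`f(e) = γe + (α + min(γe/(2w), 1 − α))·βγ² − e²/2` and `K = 2w(1 − α)/γ`, if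
`γ(1 + βγ²/(2w)) ≤ K` then `e* = γ(1 + βγ²/(2w))` is the unique maximizer of `f` on
`[0, ∞)`, and `e*` strictly exceeds the statically optimal effort `γ`. -/
theorem optimist_effort_interior
    (w γ β α : ℝ) (hw : 0 < w) (hγ : 0 < γ) (hβ : 0 < β) (hα : α ∈ Set.Ioo (0 : ℝ) 1)
    (K : ℝ) (hK : K = 2 * w * (1 - α) / γ)
    (f : ℝ → ℝ)
    (hf : f = fun e => γ * e + (α + min (γ * e / (2 * w)) (1 - α)) * (β * γ ^ 2) - e ^ 2 / 2)
    (estar : ℝ) (hstar : estar = γ * (1 + β * γ ^ 2 / (2 * w)))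
    (hcond : estar ≤ K) :
    estar ∈ Set.Ici (0 : ℝ) ∧
    (∀ e ∈ Set.Ici (0 : ℝ), e ≠ estar → f e < f estar) ∧
    γ < estar := by
  have hw2 : (0:ℝ) < 2 * w := by linarith
  have hβγ : (0:ℝ) < β * γ ^ 2 := mul_pos hβ (pow_pos hγ 2)
  have hγstar : γ < estar := by
    rw [hstar]
    nlinarith [div_pos hβγ hw2]
  refine ⟨le_of_lt (lt_trans hγ hγstar), ?_, hγstar⟩
  have hmins : min (γ * estar / (2 * w)) (1 - α) = γ * estar / (2 * w) := by
    apply min_eq_left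
    rw [div_le_iff₀ hw2]
    have h : estar * γ ≤ K * γ := mul_le_mul_of_nonneg_right hcond (le_of_lt hγ)
    rw [hK] at h
    have hKγ : 2 * w * (1 - α) / γ * γ = (1 - α) * (2 * w) := by field_simp
    nlinarith
  intro e he hne
  have hmin : min (γ * e / (2 * w)) (1 - α) ≤ γ * e / (2 * w) := min_le_left _ _
  have hsq : 0 < (e - estar) ^ 2 := by
    have h0 : e - estar ≠ 0 := sub_ne_zero.mpr hne
    positivity
  have h1 : (γ * e / (2 * w)) * (β * γ ^ 2) = e * (estar - γ) := by
    rw [hstar]; field_simp; ring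
  have h2 : (γ * estar / (2 * w)) * (β * γ ^ 2) = estar * (estar - γ) := by
    rw [hstar]; field_simp; ring
  have h3 : min (γ * e / (2 * w)) (1 - α) * (β * γ ^ 2) ≤ e * (estar - γ) := by
    rw [← h1]; exact mul_le_mul_of_nonneg_right hmin (le_of_lt hβγ)
  rw [hf]
  simp only
  rw [hmins]
  nlinarith [h3, hsq, h2]
end

section
/- Fix w > 0, γ > 0, β > 0, α ∈ (0,1), and set K = 2w(1 − α)/γ. Define f : [0, ∞) → ℝ by f(e) = γe + (α + min(γe/(2w), 1 − α))·βγ² − e²/2. If γ ≤ K ≤ γ(1 + βγ²/(2w)), then K is the unique maximizer of f on [0, ∞). In particular, for all sufficiently large β (precisely, whenever βγ²/(2w) ≥ K/γ − 1), the optimist's first-period effort equals K = 2w(1 − α)/γ, the smallest effort at which the skeptic switches with probability one. -/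
/-- Example 3, corner optimum of the persuasion effort: with
`f(e) = γe + (α + min(γe/(2w), 1 − α))·βγ² − e²/2` and `K = 2w(1 − α)/γ`, if
`γ ≤ K ≤ γ(1 + βγ²/(2w))` (i.e. `β` is large enough), then `K` — the smallest effort at
which the skeptic switches with probability one — is the unique maximizer of `f` on `[0, ∞)`. -/
theorem optimist_effort_corner
    (w γ β α : ℝ) (hw : 0 < w) (hγ : 0 < γ) (hβ : 0 < β) (hα : α ∈ Set.Ioo (0 : ℝ) 1)
    (K : ℝ) (hK : K = 2 * w * (1 - α) / γ)
    (f : ℝ → ℝ)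
    (hf : f = fun e => γ * e + (α + min (γ * e / (2 * w)) (1 - α)) * (β * γ ^ 2) - e ^ 2 / 2)
    (hlo : γ ≤ K) (hhi : K ≤ γ * (1 + β * γ ^ 2 / (2 * w))) :
    K ∈ Set.Ici (0 : ℝ) ∧
    (∀ e ∈ Set.Ici (0 : ℝ), e ≠ K → f e < f K) := by
  obtain ⟨hα0, hα1⟩ := hα
  have hw2 : (0:ℝ) < 2 * w := by linarith
  have hγK : γ * K / (2 * w) = 1 - α := by
    rw [hK]; field_simp
  have hKpos : 0 < K := by
    rw [hK]; exact div_pos (by nlinarith) hγ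
  refine ⟨le_of_lt hKpos, ?_⟩
  intro e he hne
  subst hf
  simp only
  have hminK : min (γ * K / (2 * w)) (1 - α) = 1 - α := by
    rw [hγK]; exact min_self _
  rw [hminK]
  have hbg : (1 - α) * (β * γ ^ 2) = γ * K * (β * γ ^ 2) / (2 * w) := by
    rw [← hγK]; ring
  rcases lt_or_gt_of_ne hne with hlt | hgt
  · -- e < K
    have hmine : min (γ * e / (2 * w)) (1 - α) = γ * e / (2 * w) := by
      apply min_eq_left
      rw [← hγK]
      gcongr
    rw [hmine]
    have h1 : (1 - α) * (β * γ ^ 2) * (2 * w) = γ * K * (β * γ ^ 2) := by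
      rw [← hγK]; field_simp
    have h2 : (γ * e / (2 * w)) * (β * γ ^ 2) * (2 * w) = γ * e * (β * γ ^ 2) := by
      field_simp
    have heq : γ * (1 + β * γ ^ 2 / (2 * w)) * (2 * w) = γ * (2 * w) + β * γ ^ 3 := by
      field_simp
    have hhi' : K * (2 * w) ≤ γ * (2 * w) + β * γ ^ 3 := by
      have := mul_le_mul_of_nonneg_right hhi (le_of_lt hw2)
      linarith
    have hprod : 0 ≤ (K - e) * ((γ * (2 * w) + β * γ ^ 3) - K * (2 * w)) :=
      mul_nonneg (by linarith) (by linarith)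
    have hsq : 0 < (K - e) * (K - e) :=
      mul_pos (sub_pos.2 hlt) (sub_pos.2 hlt)
    nlinarith [h1, h2, hprod, hsq, hw2]
  · -- e > K
    have hmine : min (γ * e / (2 * w)) (1 - α) = 1 - α := by
      apply min_eq_right
      rw [← hγK]
      gcongr
    rw [hmine]
    nlinarith [mul_pos (sub_pos.2 hgt) (sub_pos.2 hgt)]
end

section
/- Let S ⊆ ℝ, let g : ℝ → ℝ, and suppose e* ∈ S satisfies g(e*) > g(e) for every e ∈ S with e ≠ e* (e* is the unique maximizer of g on S). Let φ : ℝ → ℝ be nondecreasing on S and let Δ ≤ 0. Then every maximizer ê ∈ S of e ↦ g(e) + Δ·φ(e) on S satisfies ê ≤ e*. -/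
/-- Lemma 2 (ii), abstract form: if `e*` is the unique maximizer of `g` on `S`,
`φ` is nondecreasing on `S`, and `Δ ≤ 0`, then every maximizer `ê ∈ S` of `g + Δ·φ` on `S`
satisfies `ê ≤ e*`. -/
theorem maximizer_le_of_monotone_persuasion
    (S : Set ℝ) (g φ : ℝ → ℝ) (estar : ℝ) (hmem : estar ∈ S)
    (hmax : ∀ e ∈ S, e ≠ estar → g e < g estar)
    (hφ : MonotoneOn φ S)
    (Δ : ℝ) (hΔ : Δ ≤ 0)
    (ehat : ℝ) (hehat : ehat ∈ S)
    (hopt : ∀ e ∈ S, g e + Δ * φ e ≤ g ehat + Δ * φ ehat) :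
    ehat ≤ estar := by
  by_contra h
  push_neg at h
  have hne : ehat ≠ estar := ne_of_gt h
  have h1 : g ehat < g estar := hmax ehat hehat hne
  have h2 : φ estar ≤ φ ehat := hφ hmem hehat h.le
  have h3 : Δ * φ ehat ≤ Δ * φ estar := mul_le_mul_of_nonpos_left h2 hΔ
  have := hopt estar hmem
  linarith
end

section
/- Let b > 0 and S = [0, b]. Let g : ℝ → ℝ and suppose e* ∈ (0, b) satisfies g(e*) > g(e) for every e ∈ S with e ≠ e*, and g is differentiable at e*. Let φ : ℝ → ℝ be nondecreasing on S, differentiable at e* with φ'(e*) > 0, and let Δ > 0. Then every maximizer ê ∈ S of e ↦ g(e) + Δ·φ(e) on S satisfies ê > e* (strict inequality). -/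
/-!
If `ê < e*`, then `g ê < g e*` and `Δ φ ê ≤ Δ φ e*`, so `e*` beats `ê`; hence `e* ≤ ê`.
If `ê = e*`, the interior point `e*` is a local maximum both of `g` and of `g + Δ φ`, so both
derivatives vanish there and `Δ φ'(e*) = 0`, contradicting `Δ > 0` and `φ'(e*) > 0`.
-/

open Set

theorem le_of_isMaxOn_add_of_monotoneOn {α : Type*} [LinearOrder α] {s : Set α} {g ψ : α → ℝ}
    {x y : α} (hx : x ∈ s) (hy : y ∈ s) (hg : ∀ e ∈ s, e ≠ x → g e < g x)
    (hψ : MonotoneOn ψ s) (hmax : IsMaxOn (g + ψ) s y) : x ≤ y := by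
  by_contra! hyx
  have hgx : g y < g x := hg y hy hyx.ne
  have hψx : ψ y ≤ ψ x := hψ hy hx hyx.le
  have hopt : g x + ψ x ≤ g y + ψ y := isMaxOn_iff.mp hmax x hx
  linarith

theorem IsLocalMax.deriv_eq_zero_of_isLocalMax_add {f h : ℝ → ℝ} {a : ℝ} (hf : IsLocalMax f a)
    (hfh : IsLocalMax (f + h) a) (hfd : DifferentiableAt ℝ f a) (hhd : DifferentiableAt ℝ h a) :
    deriv h a = 0 := by
  have hsum : deriv (f + h) a = deriv f a + deriv h a := deriv_add hfd hhd
  rw [hfh.deriv_eq_zero, hf.deriv_eq_zero, zero_add] at hsum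
  exact hsum.symm

theorem maximizer_gt_of_strictly_increasing_persuasion_general
    (b : ℝ) (g φ : ℝ → ℝ)
    (estar : ℝ) (hstar : estar ∈ Set.Ioo 0 b)
    (hmax : ∀ e ∈ Set.Icc 0 b, e ≠ estar → g e < g estar)
    (hg : DifferentiableAt ℝ g estar)
    (hφmono : MonotoneOn φ (Set.Icc 0 b))
    (hφdiff : DifferentiableAt ℝ φ estar) (hφ' : 0 < deriv φ estar)
    (Δ : ℝ) (hΔ : 0 < Δ)
    (ehat : ℝ) (hehat : ehat ∈ Set.Icc 0 b)
    (hopt : ∀ e ∈ Set.Icc 0 b, g e + Δ * φ e ≤ g ehat + Δ * φ ehat) :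
    estar < ehat := by
  set ψ : ℝ → ℝ := fun e => Δ * φ e
  have hnhds : Icc 0 b ∈ nhds estar := Icc_mem_nhds hstar.1 hstar.2
  have hgmax : IsMaxOn g (Icc 0 b) estar := isMaxOn_iff.mpr fun e he => by
    rcases eq_or_ne e estar with rfl | hne
    exacts [le_rfl, (hmax e he hne).le]
  have hoptOn : IsMaxOn (g + ψ) (Icc 0 b) ehat := isMaxOn_iff.mpr hopt
  have hψmono : MonotoneOn ψ (Icc 0 b) := fun x hx y hy hxy =>
    mul_le_mul_of_nonneg_left (hφmono hx hy hxy) hΔ.le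
  have hle : estar ≤ ehat :=
    le_of_isMaxOn_add_of_monotoneOn (Ioo_subset_Icc_self hstar) hehat hmax hψmono hoptOn
  refine hle.lt_of_ne fun heq => ?_
  subst heq
  have hψ' : deriv ψ estar = 0 :=
    (hgmax.isLocalMax hnhds).deriv_eq_zero_of_isLocalMax_add (hoptOn.isLocalMax hnhds) hg
      (hφdiff.const_mul Δ)
  rw [deriv_const_mul Δ hφdiff] at hψ'
  exact (mul_pos hΔ hφ').ne' hψ'

/-- Lemma 2, strict inequality: if `e* ∈ (0, b)` is the unique maximizer of `g`
on `S = [0, b]`, `g` is differentiable at `e*`, `φ` is nondecreasing on `S` and differentiable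
at `e*` with `φ'(e*) > 0`, and `Δ > 0`, then every maximizer `ê ∈ S` of `g + Δ·φ` on `S`
satisfies `ê > e*`. -/
theorem maximizer_gt_of_strictly_increasing_persuasion
    (b : ℝ) (hb : 0 < b) (g φ : ℝ → ℝ)
    (estar : ℝ) (hstar : estar ∈ Set.Ioo 0 b)
    (hmax : ∀ e ∈ Set.Icc 0 b, e ≠ estar → g e < g estar)
    (hg : DifferentiableAt ℝ g estar)
    (hφmono : MonotoneOn φ (Set.Icc 0 b))
    (hφdiff : DifferentiableAt ℝ φ estar) (hφ' : 0 < deriv φ estar)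
    (Δ : ℝ) (hΔ : 0 < Δ)
    (ehat : ℝ) (hehat : ehat ∈ Set.Icc 0 b)
    (hopt : ∀ e ∈ Set.Icc 0 b, g e + Δ * φ e ≤ g ehat + Δ * φ ehat) :
    estar < ehat :=
  maximizer_gt_of_strictly_increasing_persuasion_general b g φ estar hstar hmax hg hφmono hφdiff hφ'
    Δ hΔ ehat hehat hopt
end

section
/- Let b > 0, let g : ℝ → ℝ be differentiable on [0, b] with a point e* ∈ (0, b) satisfying g(e*) > g(e) for every e ∈ [0, b] with e ≠ e*, let φ : ℝ → ℝ be nondecreasing and differentiable on [0, b], and let Δ ≥ 0. Suppose ê ∈ [e*, b) is such that g'(e) + Δ·φ'(e) > 0 for every e ∈ [e*, ê]. Then every maximizer of e ↦ g(e) + Δ·φ(e) on [0, b] is strictly greater than ê. -/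
/-- Proposition 3, abstract sufficient condition: let `e* ∈ (0, b)` be the unique
maximizer of the differentiable static payoff `g` on `[0, b]`, let `φ` be nondecreasing and
differentiable on `[0, b]`, let `Δ ≥ 0`, and suppose `ê ∈ [e*, b)` is such that
`g'(e) + Δ·φ'(e) > 0` for all `e ∈ [e*, ê]`. Then every maximizer of `g + Δ·φ` on `[0, b]`
is strictly greater than `ê`. -/
theorem maximizer_gt_threshold_of_positive_marginal
    (b : ℝ) (hb : 0 < b) (g φ : ℝ → ℝ)
    (hgdiff : ∀ e ∈ Set.Icc 0 b, DifferentiableAt ℝ g e)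
    (estar : ℝ) (hstar : estar ∈ Set.Ioo 0 b)
    (hmax : ∀ e ∈ Set.Icc 0 b, e ≠ estar → g e < g estar)
    (hφmono : MonotoneOn φ (Set.Icc 0 b))
    (hφdiff : ∀ e ∈ Set.Icc 0 b, DifferentiableAt ℝ φ e)
    (Δ : ℝ) (hΔ : 0 ≤ Δ)
    (ehat : ℝ) (hehat : ehat ∈ Set.Ico estar b)
    (hpos : ∀ e ∈ Set.Icc estar ehat, 0 < deriv g e + Δ * deriv φ e)
    (emax : ℝ) (hemax : emax ∈ Set.Icc 0 b)
    (hopt : ∀ e ∈ Set.Icc 0 b, g e + Δ * φ e ≤ g emax + Δ * φ emax) :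
    ehat < emax := by
  by_contra h
  push_neg at h
  obtain ⟨hstar0, hstarb⟩ := hstar
  obtain ⟨hse, heb⟩ := hehat
  set F : ℝ → ℝ := fun e => g e + Δ * φ e with hFdef
  have hstarmem : estar ∈ Set.Icc 0 b := ⟨le_of_lt hstar0, le_of_lt hstarb⟩
  have hehatmem : ehat ∈ Set.Icc 0 b := ⟨le_trans (le_of_lt hstar0) hse, le_of_lt heb⟩
  have hsub : Set.Icc estar ehat ⊆ Set.Icc 0 b := by
    intro x hx
    exact ⟨le_trans (le_of_lt hstar0) hx.1, le_trans hx.2 (le_of_lt heb)⟩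
  have hF : ∀ e ∈ Set.Icc 0 b, HasDerivAt F (deriv g e + Δ * deriv φ e) e := by
    intro e he
    exact (hgdiff e he).hasDerivAt.add ((hφdiff e he).hasDerivAt.const_mul Δ)
  -- Step A: estar ≤ emax
  have hA : estar ≤ emax := by
    by_contra hA
    push_neg at hA
    have hg : g emax < g estar := hmax emax hemax (ne_of_lt hA)
    have hφ : φ emax ≤ φ estar := hφmono hemax hstarmem (le_of_lt hA)
    have := hopt estar hstarmem
    nlinarith
  -- Step B: F emax ≤ F ehat via strict monotonicity on [estar, ehat]
  have hB : F emax ≤ F ehat := by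
    have hmono : StrictMonoOn F (Set.Icc estar ehat) := by
      apply StrictMonoOn.mono (s := Set.Icc estar ehat) ?_ (le_refl _)
      apply strictMonoOn_of_deriv_pos (convex_Icc estar ehat)
      · exact ContinuousOn.mono (fun x hx => ((hF x (hsub hx)).differentiableAt.continuousAt.continuousWithinAt)) (le_refl _)
      · intro x hx
        rw [interior_Icc] at hx
        have hx' : x ∈ Set.Icc estar ehat := ⟨le_of_lt hx.1, le_of_lt hx.2⟩
        rw [(hF x (hsub hx')).deriv]
        exact hpos x hx'
    rcases eq_or_lt_of_le h with heq | hlt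
    · rw [heq]
    · exact le_of_lt (hmono ⟨hA, h⟩ ⟨le_trans hA h, le_refl _⟩ hlt)
  -- Step C: derivative at ehat is positive, find x > ehat with F x > F ehat
  have hderiv : HasDerivAt F (deriv g ehat + Δ * deriv φ ehat) ehat := hF ehat hehatmem
  have hc : 0 < deriv g ehat + Δ * deriv φ ehat := hpos ehat ⟨hse, le_refl _⟩
  have hslope := (hasDerivAt_iff_tendsto_slope.mp hderiv)
  have hev : ∀ᶠ x in nhdsWithin ehat (Set.Ioi ehat), 0 < slope F ehat x := by
    have h1 : nhdsWithin ehat (Set.Ioi ehat) ≤ nhdsWithin ehat {ehat}ᶜ := by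
      apply nhdsWithin_mono
      intro x hx
      exact ne_of_gt hx
    exact (hslope.mono_left h1).eventually (eventually_gt_nhds hc)
  have hmem : Set.Ioo ehat b ∈ nhdsWithin ehat (Set.Ioi ehat) :=
    Ioo_mem_nhdsGT_of_mem ⟨le_refl _, heb⟩
  obtain ⟨x, hx1, hx2⟩ := (hev.and (Filter.eventually_of_mem hmem (fun x hx => hx))).exists
  have hxmem : x ∈ Set.Icc 0 b := ⟨le_trans hehatmem.1 (le_of_lt hx2.1), le_of_lt hx2.2⟩
  have hFx : F ehat < F x := by
    rw [slope_def_field] at hx1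
    have hden : 0 < x - ehat := sub_pos.mpr hx2.1
    have := (div_pos_iff).mp hx1
    rcases this with ⟨hn, _⟩ | ⟨_, hd⟩
    · linarith [sub_pos.mp hn]
    · linarith
  have := hopt x hxmem
  simp only [hFdef] at hFx hB
  linarith
end
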